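/- Let d ≥ 1, let P, M be symmetric positive-definite real d×d matrices, and let Ã be a real d×d matrix such that ÃᵀPÃ − P + M is negative semidefinite. Let f̃ : ℝᵈ → ℝᵈ satisfy f̃(x)ᵀ P f̃(x) ≤ xᵀ Ãᵀ P Ã x for all x ∈ ℝᵈ. Let (Ω, ℱ, ℙ) be a probability space and w : Ω → ℝᵈ a random vector whose components are square-integrable with E[w_i] = 0 for each i, and let S be the second-moment matrix S_{ij} = E[w_i w_j]. Set t₀ = tr(P S) and V(x) = 1 + (1/2) xᵀPx. Then for every R ≥ 0 and every x ∈ ℝᵈ with xᵀPx ≤ R one has E[V(f̃(x) + w)] ≤ 1 + (R + t₀)/2. -/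

import Mathlib

open Matrix MeasureTheory

/-!
Because `w` is centred and square-integrable, expanding the quadratic form kills the cross terms:
`E[(y + w)ᵀP(y + w)] = yᵀPy + tr(PS)`. With `y = f̃(x)`, the hypothesis on `f̃`, the Lyapunov
inequality `ÃᵀPÃ - P + M ≼ 0` and `M ≽ 0` give `yᵀPy ≤ xᵀÃᵀPÃx ≤ xᵀPx ≤ R`.
-/

lemma dotProduct_mulVec_le_of_negSemidef {ι : Type*} [Fintype ι] {A P M : Matrix ι ι ℝ}
    (hneg : ∀ x : ι → ℝ, x ⬝ᵥ ((A - P + M) *ᵥ x) ≤ 0) (hM : M.PosSemidef) (x : ι → ℝ) :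
    x ⬝ᵥ (A *ᵥ x) ≤ x ⬝ᵥ (P *ᵥ x) := by
  have h := hneg x
  rw [add_mulVec, sub_mulVec, dotProduct_add, dotProduct_sub] at h
  have hM0 : 0 ≤ x ⬝ᵥ (M *ᵥ x) := by simpa using hM.dotProduct_mulVec_nonneg x
  linarith

lemma dotProduct_mulVec_eq_sum {ι : Type*} [Fintype ι] (A : Matrix ι ι ℝ) (v : ι → ℝ) :
    v ⬝ᵥ (A *ᵥ v) = ∑ i, ∑ j, A i j * (v j * v i) := by
  simp only [dotProduct, mulVec, Finset.mul_sum]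
  exact Finset.sum_congr rfl fun i _ => Finset.sum_congr rfl fun j _ => by ring

lemma add_dotProduct_mulVec_add {ι : Type*} [Fintype ι] (A : Matrix ι ι ℝ) (y v : ι → ℝ) :
    (y + v) ⬝ᵥ (A *ᵥ (y + v)) = y ⬝ᵥ (A *ᵥ y) + (y ᵥ* A + A *ᵥ y) ⬝ᵥ v + v ⬝ᵥ (A *ᵥ v) := by
  rw [mulVec_add, add_dotProduct, dotProduct_add, dotProduct_add, dotProduct_mulVec y A v,
    dotProduct_comm v (A *ᵥ y), add_dotProduct]
  ring

section SecondMoment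

variable {Ω ι : Type*} [MeasurableSpace Ω] {μ : Measure Ω} [Fintype ι] {w : Ω → ι → ℝ}

lemma integral_dotProduct_eq_zero (c : ι → ℝ) (hw1 : ∀ i, Integrable (fun ω => w ω i) μ)
    (hw0 : ∀ i, ∫ ω, w ω i ∂μ = 0) :
    ∫ ω, c ⬝ᵥ w ω ∂μ = 0 := by
  simp only [dotProduct]
  rw [integral_finsetSum _ fun i _ => (hw1 i).const_mul (c i)]
  simp [integral_const_mul, hw0]

lemma integrable_dotProduct (c : ι → ℝ) (hw1 : ∀ i, Integrable (fun ω => w ω i) μ) :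
    Integrable (fun ω => c ⬝ᵥ w ω) μ :=
  integrable_finsetSum _ fun i _ => (hw1 i).const_mul (c i)

lemma integrable_dotProduct_mulVec (A : Matrix ι ι ℝ) (hw2 : ∀ i, MemLp (fun ω => w ω i) 2 μ) :
    Integrable (fun ω => w ω ⬝ᵥ (A *ᵥ w ω)) μ := by
  simp only [dotProduct_mulVec_eq_sum]
  exact integrable_finsetSum _ fun i _ => integrable_finsetSum _ fun j _ =>
    ((hw2 j).integrable_mul (hw2 i)).const_mul (A i j)

lemma integral_dotProduct_mulVec (A : Matrix ι ι ℝ) (hw2 : ∀ i, MemLp (fun ω => w ω i) 2 μ) :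
    ∫ ω, w ω ⬝ᵥ (A *ᵥ w ω) ∂μ = (A * Matrix.of fun i j => ∫ ω, w ω i * w ω j ∂μ).trace := by
  have hint : ∀ i j, Integrable (fun ω => A i j * (w ω j * w ω i)) μ := fun i j =>
    ((hw2 j).integrable_mul (hw2 i)).const_mul (A i j)
  simp only [dotProduct_mulVec_eq_sum, trace, diag_apply, mul_apply, of_apply]
  rw [integral_finsetSum _ fun i _ => integrable_finsetSum _ fun j _ => hint i j]
  refine Finset.sum_congr rfl fun i _ => ?_
  rw [integral_finsetSum _ fun j _ => hint i j]
  simp only [integral_const_mul]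

lemma integral_add_dotProduct_mulVec_add [IsProbabilityMeasure μ] (A : Matrix ι ι ℝ) (y : ι → ℝ)
    (hw2 : ∀ i, MemLp (fun ω => w ω i) 2 μ) (hw0 : ∀ i, ∫ ω, w ω i ∂μ = 0) :
    ∫ ω, (y + w ω) ⬝ᵥ (A *ᵥ (y + w ω)) ∂μ
      = y ⬝ᵥ (A *ᵥ y) + (A * Matrix.of fun i j => ∫ ω, w ω i * w ω j ∂μ).trace := by
  have hw1 : ∀ i, Integrable (fun ω => w ω i) μ := fun i => (hw2 i).integrable one_le_two
  have hlin : Integrable (fun ω => y ⬝ᵥ (A *ᵥ y) + (y ᵥ* A + A *ᵥ y) ⬝ᵥ w ω) μ :=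
    (integrable_const _).add (integrable_dotProduct _ hw1)
  simp only [add_dotProduct_mulVec_add A y]
  rw [integral_add hlin (integrable_dotProduct_mulVec A hw2),
    integral_add (integrable_const _) (integrable_dotProduct _ hw1),
    integral_const, integral_dotProduct_eq_zero _ hw1 hw0, integral_dotProduct_mulVec A hw2]
  simp only [probReal_univ, smul_eq_mul, one_mul, add_zero]

end SecondMoment

theorem expected_lyapunov_bound_on_sublevel_general (d : ℕ)
    (P M : Matrix (Fin d) (Fin d) ℝ) (hM : M.PosDef)
    (At : Matrix (Fin d) (Fin d) ℝ)
    (hneg : ∀ x : Fin d → ℝ, x ⬝ᵥ ((Atᵀ * P * At - P + M) *ᵥ x) ≤ 0)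
    (ft : (Fin d → ℝ) → (Fin d → ℝ))
    (hft : ∀ x : Fin d → ℝ, (ft x) ⬝ᵥ (P *ᵥ (ft x)) ≤ x ⬝ᵥ ((Atᵀ * P * At) *ᵥ x))
    {Ω : Type*} [MeasurableSpace Ω] (ℙ : Measure Ω) [IsProbabilityMeasure ℙ]
    (w : Ω → Fin d → ℝ)
    (hw2 : ∀ i, MemLp (fun ω => w ω i) 2 ℙ)
    (hw0 : ∀ i, ∫ ω, w ω i ∂ℙ = 0)
    (S : Matrix (Fin d) (Fin d) ℝ)
    (hS : S = Matrix.of fun i j => ∫ ω, w ω i * w ω j ∂ℙ)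
    (t₀ : ℝ) (ht₀ : t₀ = (P * S).trace)
    (V : (Fin d → ℝ) → ℝ) (hV : ∀ x, V x = 1 + (1 / 2) * (x ⬝ᵥ (P *ᵥ x))) :
    ∀ R : ℝ, 0 ≤ R → ∀ x : Fin d → ℝ, x ⬝ᵥ (P *ᵥ x) ≤ R →
      ∫ ω, V (ft x + w ω) ∂ℙ ≤ 1 + (R + t₀) / 2 := by
  intro R _ x hx
  have hy : ft x ⬝ᵥ (P *ᵥ ft x) ≤ R :=
    ((hft x).trans (dotProduct_mulVec_le_of_negSemidef hneg hM.posSemidef x)).trans hx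
  have hshift : ∀ i, MemLp (fun ω => (ft x + w ω) i) 2 ℙ := fun i =>
    (memLp_const (ft x i)).add (hw2 i)
  have hEV : ∫ ω, V (ft x + w ω) ∂ℙ = 1 + (ft x ⬝ᵥ (P *ᵥ ft x) + t₀) / 2 := by
    simp only [hV]
    rw [integral_add (integrable_const 1) ((integrable_dotProduct_mulVec P hshift).const_mul _),
      integral_const_mul, integral_add_dotProduct_mulVec_add P (ft x) hw2 hw0, ht₀, hS]
    simp only [integral_const, probReal_univ, smul_eq_mul, mul_one]
    ring
  rw [hEV]
  linarith

/-- Bound inside a sublevel set: with `V(x) = 1 + xᵀPx/2` and `t₀ = tr(PS)`,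
for every `R ≥ 0` and every `x` with `xᵀPx ≤ R`, `E[V(f̃(x) + w)] ≤ 1 + (R + t₀)/2`. -/
theorem expected_lyapunov_bound_on_sublevel (d : ℕ) (hd : 1 ≤ d)
    (P M : Matrix (Fin d) (Fin d) ℝ) (hP : P.PosDef) (hM : M.PosDef)
    (At : Matrix (Fin d) (Fin d) ℝ)
    (hneg : ∀ x : Fin d → ℝ, x ⬝ᵥ ((Atᵀ * P * At - P + M) *ᵥ x) ≤ 0)
    (ft : (Fin d → ℝ) → (Fin d → ℝ))
    (hft : ∀ x : Fin d → ℝ, (ft x) ⬝ᵥ (P *ᵥ (ft x)) ≤ x ⬝ᵥ ((Atᵀ * P * At) *ᵥ x))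
    {Ω : Type*} [MeasurableSpace Ω] (ℙ : Measure Ω) [IsProbabilityMeasure ℙ]
    (w : Ω → Fin d → ℝ)
    (hw2 : ∀ i, MemLp (fun ω => w ω i) 2 ℙ)
    (hw0 : ∀ i, ∫ ω, w ω i ∂ℙ = 0)
    (S : Matrix (Fin d) (Fin d) ℝ)
    (hS : S = Matrix.of fun i j => ∫ ω, w ω i * w ω j ∂ℙ)
    (t₀ : ℝ) (ht₀ : t₀ = (P * S).trace)
    (V : (Fin d → ℝ) → ℝ) (hV : ∀ x, V x = 1 + (1 / 2) * (x ⬝ᵥ (P *ᵥ x))) :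
    ∀ R : ℝ, 0 ≤ R → ∀ x : Fin d → ℝ, x ⬝ᵥ (P *ᵥ x) ≤ R →
      ∫ ω, V (ft x + w ω) ∂ℙ ≤ 1 + (R + t₀) / 2 :=
  expected_lyapunov_bound_on_sublevel_general d P M hM At hneg ft hft ℙ w hw2 hw0 S hS t₀ ht₀ V hV
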